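/- Let (V,f) be a nondegenerate symplectic space over a field F of characteristic ≠ 2. Then the Lie algebra 𝔰_f acting on V is exactly the finitary symplectic Lie algebra: every finitary linear map t : V → V satisfying f(t(v),w) = −f(v,t(w)) for all v,w ∈ V is a finite linear combination of the rank-one maps u ↦ f(v,u)v. -/

import Mathlib

/-! A finitary `t` has finite-dimensional image `W`, so `t = ∑ ψᵢ ⊗ eᵢ` for a basis `(eᵢ)` of `W`.
Skew-adjointness and nondegeneracy make `t` vanish on `W^⊥ = ⋂ ker f(eᵢ, ·)`, so every `ψᵢ` is a
combination of the `f(eᵢ, ·)`, i.e. `t u = ∑ f(aᵢ, u) eᵢ` for some `aᵢ`. Skew-adjointness, tested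
against every vector, then also gives `t u = ∑ f(eᵢ, u) aᵢ`, so `2t` is the sum of the symmetrized
maps `u ↦ f(aᵢ, u) eᵢ + f(eᵢ, u) aᵢ = rk1(aᵢ + eᵢ) - rk1 aᵢ - rk1 eᵢ`. -/

/-- The rank-one map associated to `v ∈ V`: `u ↦ f(v,u) • v` (the action of `v ⊗ f_v`). -/
noncomputable def rk1 {F V : Type*} [Field F] [AddCommGroup V] [Module F V]
    (f : V →ₗ[F] V →ₗ[F] F) (v : V) : Module.End F V :=
  (f v).smulRight v

open LinearMap (ker range)
open Submodule (span)

section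

variable {F V : Type*} [Field F] [AddCommGroup V] [Module F V]

theorem finiteDimensional_quotient_ker_iff (t : Module.End F V) :
    FiniteDimensional F (V ⧸ ker t) ↔ FiniteDimensional F (range t) :=
  ⟨fun _ ↦ t.quotKerEquivRange.finiteDimensional,
    fun _ ↦ t.quotKerEquivRange.symm.finiteDimensional⟩

variable (F V) in
def finitaryEnd : Submodule F (Module.End F V) where
  carrier := {t | FiniteDimensional F (V ⧸ ker t)}
  zero_mem' := (finiteDimensional_quotient_ker_iff 0).mpr <| by
    rw [LinearMap.range_zero]
    infer_instance
  add_mem' {s t} hs ht := by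
    change FiniteDimensional F (V ⧸ _) at hs ht ⊢
    rw [finiteDimensional_quotient_ker_iff] at hs ht ⊢
    exact Submodule.finiteDimensional_of_le (LinearMap.range_add_le s t)
  smul_mem' c t ht := by
    change FiniteDimensional F (V ⧸ _) at ht ⊢
    rw [finiteDimensional_quotient_ker_iff] at ht ⊢
    exact Submodule.finiteDimensional_of_le (LinearMap.range_smul_le_range t c)

theorem mem_finitaryEnd_iff {t : Module.End F V} :
    t ∈ finitaryEnd F V ↔ FiniteDimensional F (range t) :=
  finiteDimensional_quotient_ker_iff t

theorem exists_eq_sum_smulRight_of_finiteDimensional_range (t : Module.End F V)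
    [FiniteDimensional F (range t)] :
    ∃ (n : ℕ) (e : Fin n → V) (ψ : Fin n → Module.Dual F V),
      (∀ i, ker t ≤ ker (ψ i)) ∧ t = ∑ i, (ψ i).smulRight (e i) := by
  let b := Module.finBasis F (range t)
  refine ⟨_, fun i ↦ b i, fun i ↦ (b.coord i).comp t.rangeRestrict, fun i u hu ↦ ?_, ?_⟩
  · have : t.rangeRestrict u = 0 := by rwa [← LinearMap.mem_ker, LinearMap.ker_rangeRestrict]
    simp [this]
  · ext u
    have h := congrArg Subtype.val (b.sum_repr (t.rangeRestrict u))
    simp only [LinearMap.codRestrict_apply, Submodule.coe_sum, Submodule.coe_smul] at h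
    simp [h]

variable {f : V →ₗ[F] V →ₗ[F] F}

@[simp]
theorem rk1_apply (v u : V) : rk1 f v u = f v u • v := rfl

theorem rk1_mem_finitaryEnd (v : V) : rk1 f v ∈ finitaryEnd F V := by
  rw [mem_finitaryEnd_iff]
  refine Submodule.finiteDimensional_of_le (S₂ := F ∙ v) ?_
  rintro _ ⟨u, rfl⟩
  exact Submodule.smul_mem _ _ (Submodule.mem_span_singleton_self v)

theorem rk1_mem_skewAdjointSubmodule (hf : f.IsAlt) (v : V) :
    rk1 f v ∈ f.skewAdjointSubmodule := by
  rw [LinearMap.mem_skewAdjointSubmodule]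
  intro u w
  simp only [rk1_apply, Pi.neg_apply, map_neg, map_smul, LinearMap.smul_apply, smul_eq_mul,
    ← hf.neg v u]
  ring

theorem span_rk1_le (hf : f.IsAlt) :
    span F (Set.range (rk1 f)) ≤ finitaryEnd F V ⊓ f.skewAdjointSubmodule :=
  Submodule.span_le.mpr <| Set.range_subset_iff.mpr fun v ↦
    ⟨rk1_mem_finitaryEnd v, rk1_mem_skewAdjointSubmodule hf v⟩

theorem rk1_add_sub_rk1_sub_rk1 (a b : V) :
    rk1 f (a + b) - rk1 f a - rk1 f b = (f a).smulRight b + (f b).smulRight a := by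
  ext u
  simp only [LinearMap.sub_apply, LinearMap.add_apply, rk1_apply, LinearMap.smulRight_apply,
    map_add]
  module

theorem smulRight_add_smulRight_mem_span_rk1 (a b : V) :
    (f a).smulRight b + (f b).smulRight a ∈ span F (Set.range (rk1 f)) := by
  rw [← rk1_add_sub_rk1_sub_rk1]
  have hmem (v : V) : rk1 f v ∈ span F (Set.range (rk1 f)) :=
    Submodule.subset_span (Set.mem_range_self v)
  exact Submodule.sub_mem _ (Submodule.sub_mem _ (hmem _) (hmem _)) (hmem _)

theorem isSkewAdjoint_iff_forall (t : Module.End F V) :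
    f.IsSkewAdjoint t ↔ ∀ v w, f (t v) w = -f v (t w) := by
  simp [LinearMap.IsSkewAdjoint, LinearMap.IsAdjointPair]

variable (hf : f.IsAlt) (hnd : f.SeparatingLeft) {t : Module.End F V} (ht : f.IsSkewAdjoint t)
include hf hnd ht

theorem iInf_ker_le_ker_of_isSkewAdjoint {n : ℕ} {e : Fin n → V}
    {ψ : Fin n → Module.Dual F V} (hψe : t = ∑ i, (ψ i).smulRight (e i)) :
    ⨅ i, ker (f (e i)) ≤ ker t := by
  intro u hu
  simp only [Submodule.mem_iInf, LinearMap.mem_ker] at hu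
  refine hnd _ fun w ↦ ?_
  rw [ht u w, hψe]
  simp [← hf.neg _ u, hu]

theorem exists_eq_sum_smulRight_apply_of_isSkewAdjoint [FiniteDimensional F (range t)] :
    ∃ (n : ℕ) (a e : Fin n → V), t = ∑ i, (f (a i)).smulRight (e i) := by
  obtain ⟨n, e, ψ, hker, hψe⟩ := exists_eq_sum_smulRight_of_finiteDimensional_range t
  have hψ : ∀ i, ∃ a, f a = ψ i := fun i ↦ by
    obtain ⟨c, hc⟩ := (Submodule.mem_span_range_iff_exists_fun F).mp <|
      mem_span_of_iInf_ker_le_ker ((iInf_ker_le_ker_of_isSkewAdjoint hf hnd ht hψe).trans (hker i))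
    exact ⟨∑ j, c j • e j, by simpa using hc⟩
  choose a ha using hψ
  exact ⟨n, a, e, by simp_rw [ha, hψe]⟩

theorem sum_smulRight_eq_sum_smulRight_swap {n : ℕ} {a e : Fin n → V}
    (hae : t = ∑ i, (f (a i)).smulRight (e i)) :
    t = ∑ i, (f (e i)).smulRight (a i) := by
  ext u
  refine sub_eq_zero.mp <| hnd _ fun w ↦ ?_
  rw [map_sub, LinearMap.sub_apply, sub_eq_zero, ht u w, hae]
  simp [← hf.neg _ u, mul_comm]

theorem mem_span_rk1_of_isSkewAdjoint (h2 : (2 : F) ≠ 0) [FiniteDimensional F (range t)] :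
    t ∈ span F (Set.range (rk1 f)) := by
  obtain ⟨n, a, e, hae⟩ := exists_eq_sum_smulRight_apply_of_isSkewAdjoint hf hnd ht
  have htt : (2 : F) • t = ∑ i, ((f (a i)).smulRight (e i) + (f (e i)).smulRight (a i)) := by
    rw [two_smul, Finset.sum_add_distrib, ← hae,
      ← sum_smulRight_eq_sum_smulRight_swap hf hnd ht hae]
  rw [← inv_smul_smul₀ h2 t, htt]
  exact Submodule.smul_mem _ _ <|
    Submodule.sum_mem _ fun i _ ↦ smulRight_add_smulRight_mem_span_rk1 (a i) (e i)

end

/-- For a nondegenerate symplectic space `(V,f)` over a field of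
characteristic ≠ 2, the span of the rank-one maps `u ↦ f(v,u)•v` is exactly the finitary
symplectic Lie algebra: every finitary linear `t : V → V` (kernel of finite codimension)
with `f(t v, w) = −f(v, t w)` for all `v, w` is a finite linear combination of rank-one
maps, and conversely every such combination is finitary and symplectic. -/
theorem stmt8 {F V : Type*} [Field F] [AddCommGroup V] [Module F V]
    (h2 : (2 : F) ≠ 0)
    (f : V →ₗ[F] V →ₗ[F] F) (halt : ∀ v : V, f v v = 0)
    (hnd : ∀ v : V, (∀ w : V, f v w = 0) → v = 0) :
    (∀ t : Module.End F V, FiniteDimensional F (V ⧸ LinearMap.ker t) →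
      (∀ v w : V, f (t v) w = - f v (t w)) →
      t ∈ Submodule.span F (Set.range (rk1 f))) ∧
    (∀ t ∈ Submodule.span F (Set.range (rk1 f)),
      FiniteDimensional F (V ⧸ LinearMap.ker t) ∧
      ∀ v w : V, f (t v) w = - f v (t w)) := by
  refine ⟨fun t hfin hskew ↦ ?_, fun t ht ↦ ?_⟩
  · have := (finiteDimensional_quotient_ker_iff t).mp hfin
    exact mem_span_rk1_of_isSkewAdjoint halt hnd ((isSkewAdjoint_iff_forall t).mpr hskew) h2
  · obtain ⟨hfin, hskew⟩ := span_rk1_le halt ht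
    exact ⟨hfin,
      (isSkewAdjoint_iff_forall t).mp ((LinearMap.mem_skewAdjointSubmodule t).mp hskew)⟩
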